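/- arXiv:1201.3088 — 4 statements merged into one kernel-verified Lean document; each statement's English description precedes it below -/
import Mathlib

section
/- Let z′ ∈ ℂ and let (a₁, b₁), (a₂, b₂) ∈ ℂ × ℂ satisfy b₁ ≠ 0, b₂ ≠ 0, a₁ + z′·b₁ = 0 and a₂ + z′·b₂ = 0 (so that both pairwise distance functions vanish at the singular fade state z′). If |b₁| ≤ |b₂|, then for every z ∈ ℂ, |a₁ + z·b₁| ≤ |a₂ + z·b₂|; moreover if |b₁| < |b₂| then the inequality is strict for every z ≠ z′. In particular, among all class distance functions that vanish at a given singular fade state, the one with minimal coefficient |s₂ − s₂′| is the minimum of that collection at every fade state other than the singular one. -/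
theorem norm_add_mul_eq_of_add_mul_eq_zero {𝕜 : Type*} [NormedDivisionRing 𝕜]
    {a b z' : 𝕜} (h : a + z' * b = 0) (z : 𝕜) :
    ‖a + z * b‖ = ‖z - z'‖ * ‖b‖ := by
  rw [← norm_mul, sub_mul, eq_neg_of_add_eq_zero_left h, neg_add_eq_sub]

theorem ordering_of_class_distance_functions_general
    (z' a₁ b₁ a₂ b₂ : ℂ)
    (h₁ : a₁ + z' * b₁ = 0) (h₂ : a₂ + z' * b₂ = 0)
    (hle : ‖b₁‖ ≤ ‖b₂‖) :
    (∀ z : ℂ, ‖a₁ + z * b₁‖ ≤ ‖a₂ + z * b₂‖) ∧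
    (‖b₁‖ < ‖b₂‖ →
      ∀ z : ℂ, z ≠ z' → ‖a₁ + z * b₁‖ < ‖a₂ + z * b₂‖) := by
  simp only [norm_add_mul_eq_of_add_mul_eq_zero h₁, norm_add_mul_eq_of_add_mul_eq_zero h₂]
  refine ⟨fun z ↦ by gcongr, fun hlt z hz ↦ ?_⟩
  have hpos : 0 < ‖z - z'‖ := norm_pos_iff.mpr (sub_ne_zero.mpr hz)
  gcongr

/-- **Lemma 4 (ordering lemma).** Among the pairwise distance functions `z ↦ |a + z·b|`
that vanish at a common singular fade state `z′`, the one with the smaller coefficient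
`|b|` is everywhere the smaller one, strictly so away from `z′` when `|b₁| < |b₂|`. -/
theorem ordering_of_class_distance_functions
    (z' a₁ b₁ a₂ b₂ : ℂ) (hb₁ : b₁ ≠ 0) (hb₂ : b₂ ≠ 0)
    (h₁ : a₁ + z' * b₁ = 0) (h₂ : a₂ + z' * b₂ = 0)
    (hle : ‖b₁‖ ≤ ‖b₂‖) :
    (∀ z : ℂ, ‖a₁ + z * b₁‖ ≤ ‖a₂ + z * b₂‖) ∧
    (‖b₁‖ < ‖b₂‖ →
      ∀ z : ℂ, z ≠ z' → ‖a₁ + z * b₁‖ < ‖a₂ + z * b₂‖) :=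
  ordering_of_class_distance_functions_general z' a₁ b₁ a₂ b₂ h₁ h₂ hle
end

section
/- Let S₄ = {1, i, −1, −i} ⊆ ℂ be the QPSK signal set and H₄ its set of nonzero singular fade states, H₄ = {−(s₁ − s₁′)/(s₂ − s₂′) : s₁ ≠ s₁′, s₂ ≠ s₂′ in S₄}. Then the singular fade states in the wedge [0, π/4] are exactly two: {z ∈ H₄ : |z| ≥ 1 and arg z ∈ [0, π/4]} = {1, √2·e^{iπ/4}}, where arg denotes the principal argument. -/
/-!
Both signal points are fourth roots of unity, so a nonzero difference `s - s'` equals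
`s' * (s / s' - 1)` with `s / s' ∈ {i, -1, -i}`: it is a fourth root of unity times `2` or
`1 + i`. Hence every singular fade state is a fourth root of unity times one of
`1`, `2 / (1 + i) = 1 - i`, `(1 + i) / 2`. The last has modulus `1 / √2 < 1`, and among the
eight remaining candidates only `1` and `i (1 - i) = 1 + i` lie in the open right half-plane
with nonnegative imaginary part, which contains the wedge.
-/

open Complex

namespace Complex

theorem pow_four_eq_one_iff {z : ℂ} : z ^ 4 = 1 ↔ z = 1 ∨ z = I ∨ z = -1 ∨ z = -I := by
  have hfactor : z ^ 4 - 1 = (z - 1) * (z - I) * (z + 1) * (z + I) := by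
    linear_combination (z ^ 2 - 1) * I_sq
  rw [← sub_eq_zero, hfactor]
  simp only [mul_eq_zero, sub_eq_zero, add_eq_zero_iff_eq_neg, or_assoc]

theorem exists_sub_eq_mul_two_or_mul_one_add_I {s s' : ℂ} (hs : s ^ 4 = 1) (hs' : s' ^ 4 = 1)
    (hne : s ≠ s') : ∃ u : ℂ, u ^ 4 = 1 ∧ (s - s' = u * 2 ∨ s - s' = u * (1 + I)) := by
  have hs'0 : s' ≠ 0 := by rintro rfl; norm_num at hs'
  have hw : (s / s') ^ 4 = 1 := by rw [div_pow, hs, hs', div_one]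
  have hw1 : s / s' ≠ 1 := by rwa [Ne, div_eq_one_iff_eq hs'0]
  have hsub : s - s' = s' * (s / s' - 1) := by field_simp
  rw [hsub]
  rcases pow_four_eq_one_iff.mp hw with hw | hw | hw | hw <;> rw [hw]
  · exact absurd hw hw1
  · exact ⟨s' * I, by rw [mul_pow, hs', I_pow_four, one_mul],
      .inr (by linear_combination -s' * I_sq)⟩
  · exact ⟨-s', by rw [neg_pow, hs']; norm_num, .inl (by ring)⟩
  · exact ⟨-s', by rw [neg_pow, hs']; norm_num, .inr (by ring)⟩

theorem exists_neg_sub_div_sub_eq_mul {s₁ s₁' s₂ s₂' : ℂ} (hs₁ : s₁ ^ 4 = 1)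
    (hs₁' : s₁' ^ 4 = 1) (hs₂ : s₂ ^ 4 = 1) (hs₂' : s₂' ^ 4 = 1) (h₁ : s₁ ≠ s₁')
    (h₂ : s₂ ≠ s₂') :
    ∃ u : ℂ, u ^ 4 = 1 ∧ ∃ r ∈ ({1, 1 - I, (1 + I) / 2} : Set ℂ),
      -(s₁ - s₁') / (s₂ - s₂') = u * r := by
  obtain ⟨u₁, hu₁, hd₁⟩ := exists_sub_eq_mul_two_or_mul_one_add_I hs₁ hs₁' h₁
  obtain ⟨u₂, hu₂, hd₂⟩ := exists_sub_eq_mul_two_or_mul_one_add_I hs₂ hs₂' h₂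
  have hu₂0 : u₂ ≠ 0 := by rintro rfl; norm_num at hu₂
  have hI : 1 + I ≠ 0 := by simp [Complex.ext_iff]
  refine ⟨-u₁ / u₂, by rw [div_pow, neg_pow, hu₁, hu₂]; norm_num, ?_⟩
  rcases hd₁ with hd₁ | hd₁ <;> rcases hd₂ with hd₂ | hd₂ <;> rw [hd₁, hd₂]
  · exact ⟨1, by simp, by field_simp⟩
  · refine ⟨1 - I, by simp, ?_⟩
    field_simp
    linear_combination -u₁ * I_sq
  · exact ⟨(1 + I) / 2, by simp, by field_simp⟩
  · exact ⟨1, by simp, by field_simp⟩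

theorem norm_one_add_I_div_two_lt_one : ‖(1 + I) / 2‖ < 1 := by
  rw [norm_div, norm_def, normSq_apply]
  norm_num
  rw [div_lt_one two_pos, Real.sqrt_lt' two_pos]
  norm_num

theorem mul_eq_one_or_eq_one_add_I {u r : ℂ} (hu : u ^ 4 = 1)
    (hr : r ∈ ({1, 1 - I, (1 + I) / 2} : Set ℂ)) (hnorm : 1 ≤ ‖u * r‖)
    (hquad : 0 < (u * r).re ∧ 0 ≤ (u * r).im) : u * r = 1 ∨ u * r = 1 + I := by
  rw [norm_mul, norm_eq_one_of_pow_eq_one hu four_ne_zero, one_mul] at hnorm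
  have hu' := pow_four_eq_one_iff.mp hu
  obtain rfl | rfl | rfl := hr
  · left
    rcases hu' with rfl | rfl | rfl | rfl <;> norm_num at hquad
    exact mul_one 1
  · right
    rcases hu' with rfl | rfl | rfl | rfl <;> norm_num at hquad
    linear_combination -I_sq
  · exact absurd hnorm norm_one_add_I_div_two_lt_one.not_ge

theorem re_pos_and_im_nonneg_of_arg_mem_Ico {z : ℂ} (hz : z ≠ 0)
    (harg : z.arg ∈ Set.Ico 0 (Real.pi / 2)) : 0 < z.re ∧ 0 ≤ z.im := by
  have hlt : |z.arg| < Real.pi / 2 := by rw [abs_of_nonneg harg.1]; exact harg.2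
  exact ⟨(abs_arg_lt_pi_div_two_iff.mp hlt).resolve_right hz, arg_nonneg_iff.mp harg.1⟩

theorem sqrt_two_mul_exp_pi_div_four_mul_I :
    (Real.sqrt 2 : ℂ) * exp (↑(Real.pi / 4) * I) = 1 + I := by
  have hsqrt : (Real.sqrt 2 : ℂ) * Real.sqrt 2 = 2 := by
    exact_mod_cast Real.mul_self_sqrt zero_le_two
  rw [exp_mul_I, ← ofReal_cos, ← ofReal_sin, Real.cos_pi_div_four, Real.sin_pi_div_four]
  push_cast
  linear_combination (1 + I) / 2 * hsqrt

theorem arg_one_add_I : arg (1 + I) = Real.pi / 4 := by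
  rw [← sqrt_two_mul_exp_pi_div_four_mul_I, exp_mul_I,
    arg_real_mul _ (Real.sqrt_pos.mpr two_pos), arg_cos_add_sin_mul_I]
  constructor <;> linarith [Real.pi_pos]

theorem one_le_norm_one_add_I : 1 ≤ ‖1 + I‖ := by
  rw [norm_def, normSq_apply]
  norm_num

end Complex

/-- **Lemma 3 for QPSK.** For the QPSK signal set, the nonzero singular fade states lying
in the wedge `[0, π/4]` (modulus at least `1`, principal argument in `[0, π/4]`) are
exactly `1` and `√2·e^{iπ/4}`. -/
theorem qpsk_singular_fade_states_in_wedge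
    (S H : Set ℂ)
    (hS : S = {1, Complex.I, -1, -Complex.I})
    (hH : H = {z : ℂ | ∃ s₁ ∈ S, ∃ s₁' ∈ S, ∃ s₂ ∈ S, ∃ s₂' ∈ S,
        s₁ ≠ s₁' ∧ s₂ ≠ s₂' ∧ z = -(s₁ - s₁') / (s₂ - s₂')}) :
    {z ∈ H | 1 ≤ ‖z‖ ∧ z.arg ∈ Set.Icc 0 (Real.pi / 4)} =
      {1, (Real.sqrt 2 : ℂ) * Complex.exp ((↑(Real.pi / 4)) * Complex.I)} := by
  have hS4 : S = {s | s ^ 4 = 1} := hS ▸ Set.ext fun _ => pow_four_eq_one_iff.symm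
  subst hH
  rw [sqrt_two_mul_exp_pi_div_four_mul_I]
  ext z
  simp only [Set.mem_ofPred_eq, Set.mem_insert_iff, Set.mem_singleton_iff]
  constructor
  · rintro ⟨⟨s₁, hs₁, s₁', hs₁', s₂, hs₂, s₂', hs₂', h₁, h₂, rfl⟩, hnorm, harg⟩
    rw [hS4] at hs₁ hs₁' hs₂ hs₂'
    obtain ⟨u, hu, r, hr, hz⟩ := exists_neg_sub_div_sub_eq_mul hs₁ hs₁' hs₂ hs₂' h₁ h₂
    have hz0 : -(s₁ - s₁') / (s₂ - s₂') ≠ 0 := norm_pos_iff.mp (by linarith)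
    rw [hz] at hnorm hz0 harg ⊢
    have harg' : (u * r).arg ∈ Set.Ico 0 (Real.pi / 2) :=
      ⟨harg.1, harg.2.trans_lt (by linarith [Real.pi_pos])⟩
    exact mul_eq_one_or_eq_one_add_I hu hr hnorm
      (re_pos_and_im_nonneg_of_arg_mem_Ico hz0 harg')
  · subst hS
    rintro (rfl | rfl)
    · refine ⟨⟨1, by simp, -1, by simp, -1, by simp, 1, by simp, by norm_num,
        by norm_num, by norm_num⟩, by simp, by simp; positivity⟩
    · refine ⟨⟨1, by simp, -1, by simp, I, by simp, 1, by simp, by norm_num, ?_, ?_⟩,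
        one_le_norm_one_add_I, ?_⟩
      · simp [Complex.ext_iff]
      · have hI : I - 1 ≠ 0 := by simp [sub_eq_zero, Complex.ext_iff]
        field_simp
        linear_combination I_sq
      · rw [arg_one_add_I]
        exact ⟨by positivity, le_rfl⟩
end

section
/- Let S₈ = {e^{2πik/8} : k = 0, …, 7} ⊆ ℂ be the 8-PSK signal set and H₈ = {−(s₁ − s₁′)/(s₂ − s₂′) : s₁ ≠ s₁′, s₂ ≠ s₂′ in S₈} its set of nonzero singular fade states. Then the singular fade states in the wedge [0, π/8] are exactly seven: {z ∈ H₈ : |z| ≥ 1 and arg z ∈ [0, π/8]} = {1, √2, 1+√2, √(4−2√2)·e^{iπ/8}, √(1+1/√2)·e^{iπ/8}, √(2+√2)·e^{iπ/8}, √(4+2√2)·e^{iπ/8}}, where arg denotes the principal argument. -/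
/-!
Write `ζ = e^{iπ/8}`, so that the 8-PSK points are the even powers `ζ^{2a}`. Then
`ζ^{2a} - ζ^{2b} = 2i · sin(π(a-b)/8) · ζ^{a+b}`, and since `sin(π(8-d)/8) = sin(πd/8)` the
nonzero differences are exactly the numbers `2i · sin(πj/8) · ζ^p` with `1 ≤ j ≤ 4` and
`p ≡ j (mod 2)`. Hence the singular fade states are the points `(sin(πj/8) / sin(πk/8)) · ζ^n`
with `n ≡ j + k (mod 2)`. Such a point lies in the wedge iff the ratio is at least `1`, i.e.
`k ≤ j`, and `n ≡ 0` or `1 (mod 16)`; the parity of `j + k` then fixes `n`, and the six ratios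
with `k < j` together with the ratio `1` give the seven states.
-/

namespace Psk8

open Complex Real

noncomputable def ζ : ℂ := exp (↑(π / 8) * I)

noncomputable def halfChord (d : ℤ) : ℝ := Real.sin (π * d / 8)

lemma ζ_zpow (n : ℤ) : ζ ^ n = exp (↑(π * n / 8) * I) := by
  rw [ζ, ← exp_int_mul]
  push_cast
  ring_nf

lemma ζ_ne_zero : ζ ≠ 0 := exp_ne_zero _

lemma ζ_zpow_eight : ζ ^ (8 : ℤ) = -1 := by
  rw [ζ_zpow]
  push_cast
  rw [show (π : ℂ) * 8 / 8 * I = π * I by ring, exp_pi_mul_I]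

lemma ζ_zpow_emod (n : ℤ) : ζ ^ (n % 16) = ζ ^ n := by
  have h16 : ζ ^ (16 : ℤ) = 1 := by
    rw [show (16 : ℤ) = 8 * 2 by norm_num, zpow_mul, ζ_zpow_eight]; norm_num
  conv_rhs => rw [← Int.emod_add_mul_ediv n 16, zpow_add₀ ζ_ne_zero, zpow_mul, h16, one_zpow,
    mul_one]

lemma ζ_zpow_sub_zpow_neg (c : ℤ) : ζ ^ c - ζ ^ (-c) = 2 * I * halfChord c := by
  rw [ζ_zpow, ζ_zpow, exp_mul_I, exp_mul_I, halfChord]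
  push_cast
  rw [show (π : ℂ) * -c / 8 = -(π * c / 8) by ring, Complex.cos_neg, Complex.sin_neg]
  ring

lemma ζ_zpow_two_mul_sub (a b : ℤ) :
    ζ ^ (2 * a) - ζ ^ (2 * b) = 2 * I * halfChord (a - b) * ζ ^ (a + b) := by
  rw [← ζ_zpow_sub_zpow_neg, sub_mul, ← zpow_add₀ ζ_ne_zero, ← zpow_add₀ ζ_ne_zero]
  ring_nf

lemma halfChord_pos {d : ℤ} (h1 : 0 < d) (h2 : d < 8) : 0 < halfChord d := by
  apply Real.sin_pos_of_pos_of_lt_pi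
  · have : (0 : ℝ) < d := by exact_mod_cast h1
    positivity
  · have : (d : ℝ) < 8 := by exact_mod_cast h2
    nlinarith [Real.pi_pos]

lemma halfChord_pos_of_mem_Icc {j : ℤ} (hj : j ∈ Set.Icc 1 4) : 0 < halfChord j :=
  halfChord_pos (by linarith [hj.1]) (by linarith [hj.2])

lemma halfChord_eight_sub (d : ℤ) : halfChord (8 - d) = halfChord d := by
  rw [halfChord, halfChord, ← Real.sin_pi_sub]
  push_cast
  ring_nf

lemma halfChord_strictMonoOn : StrictMonoOn halfChord (Set.Icc 0 4) := by
  have hmem {d : ℤ} (hd : d ∈ Set.Icc 0 4) : π * d / 8 ∈ Set.Icc (-(π / 2)) (π / 2) := by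
    obtain ⟨h0, h4⟩ := hd
    have h0' : (0 : ℝ) ≤ d := by exact_mod_cast h0
    have h4' : (d : ℝ) ≤ 4 := by exact_mod_cast h4
    constructor <;> nlinarith [Real.pi_pos]
  intro a ha b hb hab
  exact Real.strictMonoOn_sin (hmem ha) (hmem hb) (by gcongr)

lemma exists_halfChord_eq {d : ℤ} (h1 : 0 < d) (h2 : d < 8) :
    ∃ j ∈ Set.Icc (1 : ℤ) 4, Even (d + j) ∧ halfChord d = halfChord j := by
  rcases le_or_gt d 4 with hd | hd
  · exact ⟨d, ⟨h1, hd⟩, ⟨d, rfl⟩, rfl⟩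
  · refine ⟨8 - d, ⟨by omega, by omega⟩, ⟨4, by ring⟩, (halfChord_eight_sub d).symm⟩

def signals : Set ℂ := Set.range fun a : ℤ => ζ ^ (2 * a)

lemma range_exp_eq_signals :
    Set.range (fun k : Fin 8 => exp (2 * π * I * ((k : ℕ) : ℂ) / 8)) = signals := by
  have hexp (a : ℤ) : exp (2 * π * I * (a : ℂ) / 8) = ζ ^ (2 * a) := by
    rw [ζ_zpow]; push_cast; ring_nf
  ext s
  constructor
  · rintro ⟨k, rfl⟩
    exact ⟨k, by dsimp only; rw [← hexp]; push_cast; rfl⟩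
  · rintro ⟨a, rfl⟩
    refine ⟨⟨(a % 8).toNat, by omega⟩, ?_⟩
    dsimp only
    rw [← ζ_zpow_emod, show 2 * a % 16 = 2 * ((a % 8).toNat : ℤ) by omega, ← hexp]
    push_cast
    rfl

lemma exists_signals_sub_eq_iff {w : ℂ} :
    (∃ s ∈ signals, ∃ s' ∈ signals, s ≠ s' ∧ w = s - s') ↔
      ∃ j ∈ Set.Icc (1 : ℤ) 4, ∃ p : ℤ, Even (p + j) ∧ w = 2 * I * halfChord j * ζ ^ p := by
  constructor
  · rintro ⟨_, ⟨a, rfl⟩, _, ⟨b, rfl⟩, hne, rfl⟩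
    dsimp only at hne ⊢
    set d := (a - b) % 8 with hd
    have hsig : ζ ^ (2 * a) = ζ ^ (2 * (b + d)) := by
      rw [← ζ_zpow_emod, ← ζ_zpow_emod (2 * (b + d))]
      congr 1
      omega
    have hd0 : d ≠ 0 := by
      rintro h
      apply hne
      rw [hsig, h, add_zero]
    obtain ⟨j, hj, hdj, hhc⟩ := exists_halfChord_eq (d := d) (by omega) (by omega)
    refine ⟨j, hj, 2 * b + d, ?_, ?_⟩
    · obtain ⟨c, hc⟩ := hdj
      exact ⟨b + c, by omega⟩
    · rw [hsig, ζ_zpow_two_mul_sub, ← hhc]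
      ring_nf
  · rintro ⟨j, hj, p, ⟨c, hc⟩, rfl⟩
    have hw := ζ_zpow_two_mul_sub c (c - j)
    rw [show c - (c - j) = j by ring, show c + (c - j) = p by omega] at hw
    refine ⟨_, ⟨c, rfl⟩, _, ⟨c - j, rfl⟩, ?_, hw.symm⟩
    rw [← sub_ne_zero, hw]
    simp [zpow_ne_zero p ζ_ne_zero, (halfChord_pos_of_mem_Icc hj).ne']

-- The minus sign is absorbed as `ζ ^ 8 = -1`.
lemma neg_div_chords (j k p q : ℤ) :
    -(2 * I * halfChord j * ζ ^ p) / (2 * I * halfChord k * ζ ^ q) =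
      (halfChord j / halfChord k : ℝ) * ζ ^ (p - q + 8) := by
  rw [zpow_add₀ ζ_ne_zero, zpow_sub₀ ζ_ne_zero, ζ_zpow_eight]
  have := zpow_ne_zero q ζ_ne_zero
  push_cast
  field_simp

lemma singular_fade_state_iff {z : ℂ} :
    (∃ s₁ ∈ signals, ∃ s₁' ∈ signals, ∃ s₂ ∈ signals, ∃ s₂' ∈ signals,
        s₁ ≠ s₁' ∧ s₂ ≠ s₂' ∧ z = -(s₁ - s₁') / (s₂ - s₂')) ↔
      ∃ j ∈ Set.Icc (1 : ℤ) 4, ∃ k ∈ Set.Icc (1 : ℤ) 4, ∃ n : ℤ, Even (n + j + k) ∧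
        z = (halfChord j / halfChord k : ℝ) * ζ ^ n := by
  constructor
  · rintro ⟨s₁, hs₁, s₁', hs₁', s₂, hs₂, s₂', hs₂', hne₁, hne₂, rfl⟩
    obtain ⟨j, hj, p, hp, hu⟩ := exists_signals_sub_eq_iff.1 ⟨s₁, hs₁, s₁', hs₁', hne₁, rfl⟩
    obtain ⟨k, hk, q, hq, hv⟩ := exists_signals_sub_eq_iff.1 ⟨s₂, hs₂, s₂', hs₂', hne₂, rfl⟩
    refine ⟨j, hj, k, hk, p - q + 8, ?_, ?_⟩
    · rw [Int.even_iff] at hp hq ⊢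
      omega
    · rw [hu, hv, neg_div_chords]
  · rintro ⟨j, hj, k, hk, n, hn, rfl⟩
    obtain ⟨s₁, hs₁, s₁', hs₁', hne₁, hu⟩ :=
      exists_signals_sub_eq_iff.2 ⟨j, hj, j, ⟨j, rfl⟩, rfl⟩
    obtain ⟨s₂, hs₂, s₂', hs₂', hne₂, hv⟩ :=
      exists_signals_sub_eq_iff.2 ⟨k, hk, j - n + 8, by rw [Int.even_iff] at hn ⊢; omega, rfl⟩
    refine ⟨s₁, hs₁, s₁', hs₁', s₂, hs₂, s₂', hs₂', hne₁, hne₂, ?_⟩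
    rw [← hu, ← hv, neg_div_chords]
    ring_nf

lemma exists_arg_ζ_zpow (n : ℤ) :
    ∃ r : ℤ, arg (ζ ^ n) = π * r / 8 ∧ r ∈ Set.Ioc (-8) 8 ∧ r ≡ n [ZMOD 16] := by
  set q := toIocDiv Real.two_pi_pos (-π) (π * n / 8)
  set r := n - 16 * q with hr
  have harg : arg (ζ ^ n) = π * r / 8 := by
    rw [ζ_zpow, arg_exp_mul_I, ← self_sub_toIocDiv_zsmul, zsmul_eq_mul, hr]
    push_cast
    ring
  have hmem := toIocMod_mem_Ioc Real.two_pi_pos (-π) (π * n / 8)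
  rw [← arg_exp_mul_I, ← ζ_zpow, harg] at hmem
  obtain ⟨hlo, hhi⟩ := hmem
  have hlo' : (-8 : ℝ) < r := by nlinarith [Real.pi_pos]
  have hhi' : (r : ℝ) ≤ 8 := by nlinarith [Real.pi_pos]
  refine ⟨r, harg, ⟨by exact_mod_cast hlo', by exact_mod_cast hhi'⟩, ?_⟩
  simp only [Int.ModEq]
  omega

lemma arg_ζ_zpow_mem_Icc_iff (n : ℤ) :
    arg (ζ ^ n) ∈ Set.Icc 0 (π / 8) ↔ n % 16 = 0 ∨ n % 16 = 1 := by
  obtain ⟨r, harg, ⟨hlo, hhi⟩, hr⟩ := exists_arg_ζ_zpow n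
  have hIcc : π * r / 8 ∈ Set.Icc 0 (π / 8) ↔ 0 ≤ r ∧ r ≤ 1 := by
    have hπ := Real.pi_pos
    constructor
    · rintro ⟨h0, h1⟩
      have h0' : (0 : ℝ) ≤ r := by nlinarith
      have h1' : (r : ℝ) ≤ 1 := by nlinarith
      exact ⟨by exact_mod_cast h0', by exact_mod_cast h1'⟩
    · rintro ⟨h0, h1⟩
      have h0' : (0 : ℝ) ≤ r := by exact_mod_cast h0
      have h1' : (r : ℝ) ≤ 1 := by exact_mod_cast h1
      constructor <;> nlinarith
  rw [harg, hIcc]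
  simp only [Int.ModEq] at hr
  omega

lemma norm_ofReal_mul_ζ_zpow (ρ : ℝ) (n : ℤ) : ‖(ρ : ℂ) * ζ ^ n‖ = |ρ| := by
  rw [norm_mul, ζ_zpow, norm_exp_ofReal_mul_I, norm_real, Real.norm_eq_abs, mul_one]

lemma wedge_fade_state_iff {z : ℂ} :
    ((∃ s₁ ∈ signals, ∃ s₁' ∈ signals, ∃ s₂ ∈ signals, ∃ s₂' ∈ signals,
        s₁ ≠ s₁' ∧ s₂ ≠ s₂' ∧ z = -(s₁ - s₁') / (s₂ - s₂')) ∧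
        1 ≤ ‖z‖ ∧ arg z ∈ Set.Icc 0 (π / 8)) ↔
      ∃ j ∈ Set.Icc (1 : ℤ) 4, ∃ k ∈ Set.Icc 1 j, ∃ m ∈ Set.Icc (0 : ℤ) 1,
        Even (m + j + k) ∧ z = (halfChord j / halfChord k : ℝ) * ζ ^ m := by
  have hratio {j k : ℤ} (hj : j ∈ Set.Icc 1 4) (hk : k ∈ Set.Icc 1 4) :
      1 ≤ halfChord j / halfChord k ↔ k ≤ j := by
    have hmem {d : ℤ} (hd : d ∈ Set.Icc 1 4) : d ∈ Set.Icc 0 4 := ⟨by linarith [hd.1], hd.2⟩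
    rw [one_le_div (halfChord_pos_of_mem_Icc hk),
      halfChord_strictMonoOn.le_iff_le (hmem hk) (hmem hj)]
  rw [singular_fade_state_iff]
  constructor
  · rintro ⟨⟨j, hj, k, hk, n, hn, rfl⟩, hnorm, harg⟩
    have hρ := div_pos (halfChord_pos_of_mem_Icc hj) (halfChord_pos_of_mem_Icc hk)
    rw [norm_ofReal_mul_ζ_zpow, abs_of_pos hρ, hratio hj hk] at hnorm
    rw [arg_real_mul _ hρ, arg_ζ_zpow_mem_Icc_iff] at harg
    refine ⟨j, hj, k, ⟨hk.1, hnorm⟩, n % 16, ⟨by omega, by omega⟩, ?_, by rw [ζ_zpow_emod]⟩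
    rw [Int.even_iff] at hn ⊢
    omega
  · rintro ⟨j, hj, k, ⟨hk1, hkj⟩, m, ⟨hm0, hm1⟩, hm, rfl⟩
    have hk : k ∈ Set.Icc 1 4 := ⟨hk1, hkj.trans hj.2⟩
    have hρ := div_pos (halfChord_pos_of_mem_Icc hj) (halfChord_pos_of_mem_Icc hk)
    refine ⟨⟨j, hj, k, hk, m, hm, rfl⟩, ?_, ?_⟩
    · rw [norm_ofReal_mul_ζ_zpow, abs_of_pos hρ, hratio hj hk]
      exact hkj
    · rw [arg_real_mul _ hρ, arg_ζ_zpow_mem_Icc_iff]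
      omega

lemma halfChord_one_sq : halfChord 1 ^ 2 = (2 - √2) / 4 := by
  rw [halfChord, Int.cast_one, mul_one, Real.sin_pi_div_eight, div_pow,
    Real.sq_sqrt (by linarith [Real.sqrt_two_lt_three_halves])]
  norm_num

lemma halfChord_two_sq : halfChord 2 ^ 2 = 1 / 2 := by
  rw [halfChord, show π * ((2 : ℤ) : ℝ) / 8 = π / 4 by push_cast; ring, Real.sin_pi_div_four,
    div_pow, Real.sq_sqrt zero_le_two]
  norm_num

lemma halfChord_three_sq : halfChord 3 ^ 2 = (2 + √2) / 4 := by
  rw [halfChord, show π * ((3 : ℤ) : ℝ) / 8 = π / 2 - π / 8 by push_cast; ring,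
    Real.sin_pi_div_two_sub, Real.cos_pi_div_eight, div_pow, Real.sq_sqrt (by positivity)]
  norm_num

lemma halfChord_four_sq : halfChord 4 ^ 2 = 1 := by
  rw [halfChord, show π * ((4 : ℤ) : ℝ) / 8 = π / 2 by push_cast; ring, Real.sin_pi_div_two,
    one_pow]

lemma div_eq_of_sq_eq_sq_mul_sq {x y r : ℝ} (hx : 0 ≤ x) (hy : 0 < y) (hr : 0 ≤ r)
    (h : x ^ 2 = r ^ 2 * y ^ 2) : x / y = r := by
  rw [div_eq_iff hy.ne']
  exact (pow_left_inj₀ hx (by positivity) two_ne_zero).1 (by rw [h, mul_pow])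

@[simp]
lemma halfChord_two_div_one : halfChord 2 / halfChord 1 = √(2 + √2) := by
  apply div_eq_of_sq_eq_sq_mul_sq (halfChord_pos_of_mem_Icc (by norm_num)).le
    (halfChord_pos_of_mem_Icc (by norm_num)) (Real.sqrt_nonneg _)
  rw [halfChord_two_sq, halfChord_one_sq, Real.sq_sqrt (by positivity)]
  linear_combination (1 / 4 : ℝ) * Real.sq_sqrt zero_le_two

@[simp]
lemma halfChord_three_div_one : halfChord 3 / halfChord 1 = 1 + √2 := by
  apply div_eq_of_sq_eq_sq_mul_sq (halfChord_pos_of_mem_Icc (by norm_num)).le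
    (halfChord_pos_of_mem_Icc (by norm_num)) (by positivity)
  rw [halfChord_three_sq, halfChord_one_sq]
  linear_combination (√2 / 4) * Real.sq_sqrt zero_le_two

@[simp]
lemma halfChord_four_div_one : halfChord 4 / halfChord 1 = √(4 + 2 * √2) := by
  apply div_eq_of_sq_eq_sq_mul_sq (halfChord_pos_of_mem_Icc (by norm_num)).le
    (halfChord_pos_of_mem_Icc (by norm_num)) (Real.sqrt_nonneg _)
  rw [halfChord_four_sq, halfChord_one_sq, Real.sq_sqrt (by positivity)]
  linear_combination (1 / 2 : ℝ) * Real.sq_sqrt zero_le_two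

@[simp]
lemma halfChord_three_div_two : halfChord 3 / halfChord 2 = √(1 + 1 / √2) := by
  apply div_eq_of_sq_eq_sq_mul_sq (halfChord_pos_of_mem_Icc (by norm_num)).le
    (halfChord_pos_of_mem_Icc (by norm_num)) (Real.sqrt_nonneg _)
  rw [halfChord_three_sq, halfChord_two_sq, Real.sq_sqrt (by positivity)]
  field_simp
  linear_combination 2 * Real.sq_sqrt zero_le_two

@[simp]
lemma halfChord_four_div_two : halfChord 4 / halfChord 2 = √2 := by
  apply div_eq_of_sq_eq_sq_mul_sq (halfChord_pos_of_mem_Icc (by norm_num)).le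
    (halfChord_pos_of_mem_Icc (by norm_num)) (Real.sqrt_nonneg _)
  rw [halfChord_four_sq, halfChord_two_sq, Real.sq_sqrt zero_le_two]
  norm_num

@[simp]
lemma halfChord_four_div_three : halfChord 4 / halfChord 3 = √(4 - 2 * √2) := by
  apply div_eq_of_sq_eq_sq_mul_sq (halfChord_pos_of_mem_Icc (by norm_num)).le
    (halfChord_pos_of_mem_Icc (by norm_num)) (Real.sqrt_nonneg _)
  rw [halfChord_four_sq, halfChord_three_sq,
    Real.sq_sqrt (by linarith [Real.sqrt_two_lt_three_halves])]
  linear_combination (1 / 2 : ℝ) * Real.sq_sqrt zero_le_two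

end Psk8

open Psk8

/-- **Example 3.** For the 8-PSK signal set, the nonzero singular fade states lying in
the wedge `[0, π/8]` (modulus at least `1`, principal argument in `[0, π/8]`) are exactly
the seven points `1`, `√2`, `1+√2`, `√(4−2√2)·e^{iπ/8}`, `√(1+1/√2)·e^{iπ/8}`,
`√(2+√2)·e^{iπ/8}`, `√(4+2√2)·e^{iπ/8}`. -/
theorem psk8_singular_fade_states_in_wedge
    (S H : Set ℂ)
    (hS : S = Set.range (fun k : Fin 8 =>
      Complex.exp (2 * Real.pi * Complex.I * ((k : ℕ) : ℂ) / 8)))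
    (hH : H = {z : ℂ | ∃ s₁ ∈ S, ∃ s₁' ∈ S, ∃ s₂ ∈ S, ∃ s₂' ∈ S,
        s₁ ≠ s₁' ∧ s₂ ≠ s₂' ∧ z = -(s₁ - s₁') / (s₂ - s₂')}) :
    {z ∈ H | 1 ≤ ‖z‖ ∧ z.arg ∈ Set.Icc 0 (Real.pi / 8)} =
      {(1 : ℂ), (Real.sqrt 2 : ℂ), ((1 + Real.sqrt 2 : ℝ) : ℂ),
        (Real.sqrt (4 - 2 * Real.sqrt 2) : ℂ) *
          Complex.exp ((↑(Real.pi / 8)) * Complex.I),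
        (Real.sqrt (1 + 1 / Real.sqrt 2) : ℂ) *
          Complex.exp ((↑(Real.pi / 8)) * Complex.I),
        (Real.sqrt (2 + Real.sqrt 2) : ℂ) *
          Complex.exp ((↑(Real.pi / 8)) * Complex.I),
        (Real.sqrt (4 + 2 * Real.sqrt 2) : ℂ) *
          Complex.exp ((↑(Real.pi / 8)) * Complex.I)} := by
  subst hS hH
  ext z
  rw [Set.mem_sep_iff, Set.mem_ofPred_eq, range_exp_eq_signals, wedge_fade_state_iff]
  constructor
  · rintro ⟨j, ⟨hj1, hj4⟩, k, ⟨hk1, hkj⟩, m, ⟨hm0, hm1⟩, hpar, rfl⟩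
    rcases hkj.eq_or_lt with rfl | hkj
    · have hm : m = 0 := by rw [Int.even_iff] at hpar; omega
      simp [hm, div_self (halfChord_pos_of_mem_Icc ⟨hk1, hj4⟩).ne']
    interval_cases j <;> interval_cases k <;> interval_cases m <;>
      first
        | exact absurd hpar (by decide)
        | simp [ζ]
  · have h11 : halfChord 1 / halfChord 1 = 1 :=
      div_self (halfChord_pos_of_mem_Icc (by norm_num)).ne'
    rintro (rfl | rfl | rfl | rfl | rfl | rfl | rfl)
    · exact ⟨1, by norm_num, 1, by norm_num, 0, by norm_num, by decide, by simp [h11]⟩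
    · exact ⟨4, by norm_num, 2, by norm_num, 0, by norm_num, by decide, by simp⟩
    · exact ⟨3, by norm_num, 1, by norm_num, 0, by norm_num, by decide, by simp⟩
    · exact ⟨4, by norm_num, 3, by norm_num, 1, by norm_num, by decide, by simp [ζ]⟩
    · exact ⟨3, by norm_num, 2, by norm_num, 1, by norm_num, by decide, by simp [ζ]⟩
    · exact ⟨2, by norm_num, 1, by norm_num, 1, by norm_num, by decide, by simp [ζ]⟩
    · exact ⟨4, by norm_num, 1, by norm_num, 1, by norm_num, by decide, by simp [ζ]⟩
end

section
/- Let S₄ = {1, i, −1, −i} ⊆ ℂ be the QPSK signal set and for γ > 0, θ ∈ ℝ define d_min(γ, θ) = min{|(s₁ − s₁′) + γe^{iθ}(s₂ − s₂′)| : (s₁, s₂) ≠ (s₁′, s₂′) ∈ S₄ × S₄}. Then d_min(1, π/6) = √(4 − 2√3), and for every θ ∈ [0, π/4], d_min(1, θ) ≤ √(4 − 2√3). That is, on the arc γ = 1, θ ∈ [0, π/4], the minimum distance of the effective constellation is maximized at θ = π/6 (the optimal rotation angle of 30° for the violation circle centred at the singular fade state (1, 0)). -/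
/-- The minimum distance of the effective constellation for two QPSK users at fade state
`γe^{iθ}`. -/
noncomputable def qpskDmin (γ θ : ℝ) : ℝ :=
  sInf {d : ℝ | ∃ s₁ ∈ ({1, Complex.I, -1, -Complex.I} : Set ℂ),
      ∃ s₂ ∈ ({1, Complex.I, -1, -Complex.I} : Set ℂ),
      ∃ s₁' ∈ ({1, Complex.I, -1, -Complex.I} : Set ℂ),
      ∃ s₂' ∈ ({1, Complex.I, -1, -Complex.I} : Set ℂ),
      (s₁, s₂) ≠ (s₁', s₂') ∧
      d = ‖(s₁ - s₁') + (γ : ℂ) * Complex.exp ((θ : ℂ) * Complex.I) * (s₂ - s₂')‖}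

/-!
With `ω = e^{iθ}` and `γ = 1`, the pairs `(1, -1), (-i, i)` and `(1, i), (i, -i)` are at squared
distance `4 - 4 cos θ` and `6 - 4 (sin θ + cos θ)`; the first is at most `4 - 2√3` on `[0, π/6]`,
the second on `[π/6, π/4]`, and both attain it at `θ = π/6`.

For the matching lower bound at `ω = (√3 + i)/2`, view QPSK symbols as the units of `ℤ[i]`: for
Gaussian integers `u, v` one has `4 |u + ωv|² = |2u + iv|² + 3|v|² + 4√3 Re(u v̄)`, which is
`a + b√3` with `a, b ∈ ℤ`, so the bound reduces to a finite integer check.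
-/

open Complex Real ComplexConjugate

local notation "S₄" => ({1, I, -1, -I} : Set ℂ)

section Dmin

lemma bddBelow_qpskDmin_set (γ θ : ℝ) :
    BddBelow {d : ℝ | ∃ s₁ ∈ S₄, ∃ s₂ ∈ S₄, ∃ s₁' ∈ S₄, ∃ s₂' ∈ S₄,
      (s₁, s₂) ≠ (s₁', s₂') ∧ d = ‖(s₁ - s₁') + (γ : ℂ) * exp (θ * I) * (s₂ - s₂')‖} :=
  ⟨0, by rintro d ⟨-, -, -, -, -, -, -, -, -, rfl⟩; positivity⟩

variable {γ θ : ℝ}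

lemma qpskDmin_le {s₁ s₂ s₁' s₂' : ℂ} (h₁ : s₁ ∈ S₄) (h₂ : s₂ ∈ S₄) (h₁' : s₁' ∈ S₄)
    (h₂' : s₂' ∈ S₄) (hne : (s₁, s₂) ≠ (s₁', s₂')) :
    qpskDmin γ θ ≤ ‖(s₁ - s₁') + (γ : ℂ) * exp (θ * I) * (s₂ - s₂')‖ :=
  csInf_le (bddBelow_qpskDmin_set γ θ) ⟨s₁, h₁, s₂, h₂, s₁', h₁', s₂', h₂', hne, rfl⟩

lemma le_qpskDmin {c : ℝ} (h : ∀ s₁ ∈ S₄, ∀ s₂ ∈ S₄, ∀ s₁' ∈ S₄, ∀ s₂' ∈ S₄,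
      (s₁, s₂) ≠ (s₁', s₂') → c ≤ ‖(s₁ - s₁') + (γ : ℂ) * exp (θ * I) * (s₂ - s₂')‖) :
    c ≤ qpskDmin γ θ := by
  refine le_csInf ⟨_, 1, by simp, 1, by simp, I, by simp, 1, by simp,
    by simp [Prod.ext_iff, Complex.ext_iff], rfl⟩ ?_
  rintro d ⟨s₁, h₁, s₂, h₂, s₁', h₁', s₂', h₂', hne, rfl⟩
  exact h s₁ h₁ s₂ h₂ s₁' h₁' s₂' h₂' hne

lemma qpskDmin_le_sqrt_two_add_two_mul_sq_sub_cos :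
    qpskDmin γ θ ≤ √(2 + 2 * γ ^ 2 - 4 * γ * Real.cos θ) := by
  refine (qpskDmin_le (s₁ := 1) (s₂ := -1) (s₁' := -I) (s₂' := I) (by simp) (by simp) (by simp)
    (by simp) (by simp [Prod.ext_iff, Complex.ext_iff])).trans_eq ?_
  rw [norm_def]
  congr 1
  simp only [normSq_apply, add_re, add_im, sub_re, sub_im, mul_re, mul_im, ofReal_re, ofReal_im,
    exp_ofReal_mul_I_re, exp_ofReal_mul_I_im, one_re, one_im, neg_re, neg_im, I_re, I_im]
  linear_combination (2 * γ ^ 2) * Real.sin_sq_add_cos_sq θ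

lemma qpskDmin_le_sqrt_two_add_four_mul_sq_sub_sin_add_cos :
    qpskDmin γ θ ≤ √(2 + 4 * γ ^ 2 - 4 * γ * (Real.sin θ + Real.cos θ)) := by
  refine (qpskDmin_le (s₁ := 1) (s₂ := I) (s₁' := I) (s₂' := -I) (by simp) (by simp) (by simp)
    (by simp) (by simp [Prod.ext_iff, Complex.ext_iff])).trans_eq ?_
  rw [norm_def]
  congr 1
  simp only [normSq_apply, add_re, add_im, sub_re, sub_im, mul_re, mul_im, ofReal_re, ofReal_im,
    exp_ofReal_mul_I_re, exp_ofReal_mul_I_im, one_re, one_im, neg_re, neg_im, I_re, I_im]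
  linear_combination (4 * γ ^ 2) * Real.sin_sq_add_cos_sq θ

end Dmin

lemma sqrt_three_div_two_le_cos {θ : ℝ} (h₀ : 0 ≤ θ) (h₁ : θ ≤ π / 6) : √3 / 2 ≤ Real.cos θ := by
  rw [← Real.cos_pi_div_six]
  exact Real.cos_le_cos_of_nonneg_of_le_pi h₀ (by linarith [Real.pi_pos]) h₁

lemma one_add_sqrt_three_div_two_le_sin_add_cos {θ : ℝ} (h₀ : π / 6 ≤ θ) (h₁ : θ ≤ π / 4) :
    (1 + √3) / 2 ≤ Real.sin θ + Real.cos θ := by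
  have hsin : √3 / 2 ≤ Real.sin (2 * θ) := by
    rw [← Real.sin_pi_div_three]
    exact Real.sin_le_sin_of_le_of_le_pi_div_two (by linarith [Real.pi_pos]) (by linarith)
      (by linarith)
  have hsq : ((1 + √3) / 2) ^ 2 ≤ (Real.sin θ + Real.cos θ) ^ 2 := by
    have h3 : √3 ^ 2 = 3 := Real.sq_sqrt (by norm_num)
    rw [Real.sin_two_mul] at hsin
    nlinarith [Real.sin_sq_add_cos_sq θ]
  exact le_of_sq_le_sq hsq (add_nonneg
    (Real.sin_nonneg_of_nonneg_of_le_pi (by linarith [Real.pi_pos]) (by linarith [Real.pi_pos]))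
    (Real.cos_nonneg_of_neg_pi_div_two_le_of_le (by linarith [Real.pi_pos])
      (by linarith [Real.pi_pos])))

lemma add_sqrt_three_mul_nonneg {m n : ℝ} (h₁ : 0 ≤ m + n) (h₂ : 0 ≤ m + 2 * n) :
    0 ≤ m + √3 * n := by
  have hl : 1 ≤ √3 := Real.le_sqrt_of_sq_le (by norm_num)
  have hu : √3 ≤ 2 := Real.sqrt_le_iff.2 ⟨by norm_num, by norm_num⟩
  have : m + √3 * n = (2 - √3) * (m + n) + (√3 - 1) * (m + 2 * n) := by ring
  rw [this]
  exact add_nonneg (mul_nonneg (by linarith) h₁) (mul_nonneg (by linarith) h₂)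

lemma four_mul_normSq_add_exp_pi_div_six_mul (u v : ℂ) :
    4 * normSq (u + exp (↑(π / 6) * I) * v) =
      normSq (2 * u + I * v) + 3 * normSq v + 4 * √3 * (u * conj v).re := by
  have h3 : √3 ^ 2 = 3 := Real.sq_sqrt (by norm_num)
  simp only [normSq_apply, add_re, add_im, mul_re, mul_im, exp_ofReal_mul_I_re,
    exp_ofReal_mul_I_im, Real.cos_pi_div_six, Real.sin_pi_div_six, conj_re, conj_im, I_re, I_im,
    re_ofNat, im_ofNat]
  linear_combination (v.re ^ 2 + v.im ^ 2) * h3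

def qpskGauss : List GaussianInt := [1, ⟨0, 1⟩, -1, -⟨0, 1⟩]

lemma exists_mem_qpskGauss {s : ℂ} (hs : s ∈ S₄) : ∃ g ∈ qpskGauss, (g : ℂ) = s := by
  rcases hs with rfl | rfl | rfl | rfl
  exacts [⟨1, by decide, by simp⟩, ⟨⟨0, 1⟩, by decide, by simp [GaussianInt.toComplex_def']⟩,
    ⟨-1, by decide, by simp⟩, ⟨-⟨0, 1⟩, by decide, by simp [GaussianInt.toComplex_def']⟩]

/-- With `four_mul_normSq_add_exp_pi_div_six_mul`, `4 |u + e^{iπ/6} v|² - (16 - 8√3)` is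
`m + √3 n` for integers `m, n`; these are the hypotheses `0 ≤ m + n`, `0 ≤ m + 2n` of
`add_sqrt_three_mul_nonneg`, checked over all 256 quadruples. -/
lemma qpskGauss_bounds : ∀ s₁ ∈ qpskGauss, ∀ s₂ ∈ qpskGauss, ∀ s₁' ∈ qpskGauss,
    ∀ s₂' ∈ qpskGauss, (s₁, s₂) ≠ (s₁', s₂') →
      let u := s₁ - s₁'
      let v := s₂ - s₂'
      8 ≤ (2 * u + ⟨0, 1⟩ * v).norm + 3 * v.norm + 4 * (u * star v).re ∧
        0 ≤ (2 * u + ⟨0, 1⟩ * v).norm + 3 * v.norm + 8 * (u * star v).re := by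
  decide

lemma four_sub_two_sqrt_three_le_normSq_of_gaussianInt (u v : GaussianInt)
    (h₁ : 8 ≤ (2 * u + ⟨0, 1⟩ * v).norm + 3 * v.norm + 4 * (u * star v).re)
    (h₂ : 0 ≤ (2 * u + ⟨0, 1⟩ * v).norm + 3 * v.norm + 8 * (u * star v).re) :
    4 - 2 * √3 ≤ normSq (u + exp (↑(π / 6) * I) * v) := by
  have hI : ((⟨0, 1⟩ : GaussianInt) : ℂ) = I := by simp [GaussianInt.toComplex_def']
  have hM : normSq (2 * (u : ℂ) + I * v) = (2 * u + ⟨0, 1⟩ * v).norm := by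
    rw [GaussianInt.intCast_real_norm, GaussianInt.toComplex_add, GaussianInt.toComplex_mul,
      GaussianInt.toComplex_mul, hI, map_ofNat]
  have hN : ((u : ℂ) * conj (v : ℂ)).re = (u * star v).re := by
    rw [GaussianInt.intCast_re, GaussianInt.toComplex_mul, GaussianInt.toComplex_star]
  have key := four_mul_normSq_add_exp_pi_div_six_mul u v
  rw [hM, hN, ← GaussianInt.intCast_real_norm] at key
  have h₁' : (8 : ℝ) ≤ (2 * u + ⟨0, 1⟩ * v).norm + 3 * v.norm + 4 * (u * star v).re := by
    exact_mod_cast h₁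
  have h₂' : (0 : ℝ) ≤ (2 * u + ⟨0, 1⟩ * v).norm + 3 * v.norm + 8 * (u * star v).re := by
    exact_mod_cast h₂
  have := add_sqrt_three_mul_nonneg
    (m := (2 * u + ⟨0, 1⟩ * v).norm + 3 * v.norm - 16) (n := 4 * (u * star v).re + 8)
    (by linarith) (by linarith)
  linarith

lemma four_sub_two_sqrt_three_le_normSq {s₁ s₂ s₁' s₂' : ℂ} (h₁ : s₁ ∈ S₄) (h₂ : s₂ ∈ S₄)
    (h₁' : s₁' ∈ S₄) (h₂' : s₂' ∈ S₄) (hne : (s₁, s₂) ≠ (s₁', s₂')) :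
    4 - 2 * √3 ≤ normSq ((s₁ - s₁') + exp (↑(π / 6) * I) * (s₂ - s₂')) := by
  obtain ⟨g₁, hg₁, rfl⟩ := exists_mem_qpskGauss h₁
  obtain ⟨g₂, hg₂, rfl⟩ := exists_mem_qpskGauss h₂
  obtain ⟨g₁', hg₁', rfl⟩ := exists_mem_qpskGauss h₁'
  obtain ⟨g₂', hg₂', rfl⟩ := exists_mem_qpskGauss h₂'
  obtain ⟨hA, hB⟩ := qpskGauss_bounds g₁ hg₁ g₂ hg₂ g₁' hg₁' g₂' hg₂'
    (ne_of_apply_ne (Prod.map GaussianInt.toComplex GaussianInt.toComplex) hne)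
  rw [← map_sub, ← map_sub]
  exact four_sub_two_sqrt_three_le_normSq_of_gaussianInt _ _ hA hB

/-- **Example 6 (part).** On the arc `γ = 1`, `θ ∈ [0, π/4]`, the minimum distance of the
effective QPSK constellation is maximized at `θ = π/6` (the optimal rotation angle of 30°
for the violation circle centred at the singular fade state `(1, 0)`), where it equals
`√(4 − 2√3)`. -/
theorem qpsk_optimal_rotation_at_gamma_one :
    qpskDmin 1 (Real.pi / 6) = Real.sqrt (4 - 2 * Real.sqrt 3) ∧
    ∀ θ ∈ Set.Icc (0 : ℝ) (Real.pi / 4),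
      qpskDmin 1 θ ≤ Real.sqrt (4 - 2 * Real.sqrt 3) := by
  have hupper : ∀ θ ∈ Set.Icc (0 : ℝ) (π / 4), qpskDmin 1 θ ≤ √(4 - 2 * √3) := by
    rintro θ ⟨h₀, h₁⟩
    rcases le_total θ (π / 6) with h | h
    · refine qpskDmin_le_sqrt_two_add_two_mul_sq_sub_cos.trans (Real.sqrt_le_sqrt ?_)
      linarith [sqrt_three_div_two_le_cos h₀ h]
    · refine qpskDmin_le_sqrt_two_add_four_mul_sq_sub_sin_add_cos.trans (Real.sqrt_le_sqrt ?_)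
      linarith [one_add_sqrt_three_div_two_le_sin_add_cos h h₁]
  refine ⟨le_antisymm (hupper _ ⟨by positivity, by linarith [Real.pi_pos]⟩) ?_, hupper⟩
  refine le_qpskDmin fun s₁ h₁ s₂ h₂ s₁' h₁' s₂' h₂' hne => ?_
  rw [ofReal_one, one_mul, norm_def]
  exact Real.sqrt_le_sqrt (four_sub_two_sqrt_three_le_normSq h₁ h₂ h₁' h₂' hne)
end
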